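/- arXiv:2004.10485 — 4 statements merged into one kernel-verified Lean document; each statement's English description precedes it below -/
import Mathlib

section
/- (Boxing lemma for characteristic functions) Let E ⊆ ℝ^d be a measurable set of finite measure contained in the union of a family ℬ of open balls B each satisfying |E∩B| ≤ |B|/2. Then there exists a family ℱ of balls F with |F∩E| = |F|/2 covering almost every point of E, such that each F ∈ ℱ is contained in some B ∈ ℬ. -/
/-!
At a Lebesgue density point `x` of `E` lying in a ball `B` of `ℬ`, a small ball around `x` holds
more than half of its measure in `E`, while `B` holds at most half. Sliding the small ball linearly
into `B` keeps `x` inside and stays inside `B`; since spheres are null, the measures involved vary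
continuously, and the intermediate value theorem yields a ball in between that is exactly half
filled by `E`. By the density theorem this covers almost every point of `E`.
-/

open MeasureTheory Metric Set Filter
open scoped ENNReal Topology

def halfBalls {V : Type*} [PseudoMetricSpace V] [MeasurableSpace V] (μ : Measure V) (E : Set V)
    (ℬ : Set (V × ℝ)) : Set (V × ℝ) :=
  {q | 0 < q.2 ∧ μ (ball q.1 q.2 ∩ E) = μ (ball q.1 q.2) / 2 ∧
    ∃ p ∈ ℬ, ball q.1 q.2 ⊆ ball p.1 p.2}

section Interpolation

variable {V : Type*} [NormedAddCommGroup V] [NormedSpace ℝ V] {x c : V} {r R t : ℝ}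

lemma ball_lineMap_subset_ball (ht : t ∈ Icc (0 : ℝ) 1) (hrR : r + dist x c ≤ R) :
    ball (AffineMap.lineMap x c t) ((1 - t) * r + t * R) ⊆ ball c R := by
  refine ball_subset_ball' ?_
  rw [dist_lineMap_right, Real.norm_of_nonneg (sub_nonneg.2 ht.2)]
  nlinarith [mul_le_mul_of_nonneg_left hrR (sub_nonneg.2 ht.2)]

lemma mem_ball_lineMap_left (hr : 0 < r) (ht : t ∈ Icc (0 : ℝ) 1) (hrR : r + dist x c ≤ R) :
    x ∈ ball (AffineMap.lineMap x c t) ((1 - t) * r + t * R) := by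
  rw [mem_ball', dist_lineMap_left, Real.norm_of_nonneg ht.1]
  nlinarith [mul_le_mul_of_nonneg_left hrR ht.1, ht.2]

end Interpolation

section AddHaar

variable {V : Type*} [NormedAddCommGroup V] [NormedSpace ℝ V] [FiniteDimensional ℝ V]
  [MeasurableSpace V] [BorelSpace V] [Nontrivial V] (μ : Measure V) [μ.IsAddHaarMeasure]

lemma measure_inter_ball_eq_measure_inter_closedBall (S : Set V) (x : V) (r : ℝ) :
    μ (S ∩ ball x r) = μ (S ∩ closedBall x r) := by
  refine le_antisymm (measure_mono (inter_subset_inter_right _ ball_subset_closedBall)) ?_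
  calc μ (S ∩ closedBall x r) ≤ μ (S ∩ ball x r ∪ sphere x r) := by
        rw [← ball_union_sphere, inter_union_distrib_left]
        exact measure_mono (union_subset_union_right _ inter_subset_right)
    _ ≤ μ (S ∩ ball x r) + μ (sphere x r) := measure_union_le _ _
    _ = μ (S ∩ ball x r) := by rw [Measure.addHaar_sphere, add_zero]

lemma continuous_measure_inter_ball {S : Set V} (hS : μ S ≠ ∞) {X : Type*} [TopologicalSpace X]
    [FirstCountableTopology X] {c : X → V} {r : X → ℝ} (hc : Continuous c) (hr : Continuous r) :
    Continuous fun t => μ (S ∩ ball (c t) (r t)) := by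
  have : IsFiniteMeasure (μ.restrict S) := ⟨by rwa [Measure.restrict_apply_univ, lt_top_iff_ne_top]⟩
  simp_rw [inter_comm S, ← Measure.restrict_apply measurableSet_ball]
  refine continuous_iff_continuousAt.2 fun t₀ =>
    tendsto_measure_of_ae_tendsto_indicator_of_isFiniteMeasure _ measurableSet_ball
      (fun _ => measurableSet_ball) ?_
  -- off the null sphere `∂ ball (c t₀) (r t₀)`, membership in the moving ball is locally constant
  filter_upwards [ae_restrict_of_ae (measure_eq_zero_iff_ae_notMem.1
    (Measure.addHaar_sphere μ (c t₀) (r t₀)))] with z hz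
  have hdist : Continuous fun t => dist z (c t) := continuous_const.dist hc
  rcases lt_or_gt_of_ne (show dist z (c t₀) ≠ r t₀ from hz) with h | h
  · filter_upwards [hdist.continuousAt.eventually_lt hr.continuousAt h] with t ht
    simp only [mem_ball, ht, h]
  · filter_upwards [hr.continuousAt.eventually_lt hdist.continuousAt h] with t ht
    simp only [mem_ball, ht.not_gt, h.not_gt]

lemma exists_half_le_measure_inter_ball {E : Set V} {x : V}
    (hdens : Tendsto (fun ρ => μ (E ∩ closedBall x ρ) / μ (closedBall x ρ)) (𝓝[>] 0) (𝓝 1))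
    {ε : ℝ} (hε : 0 < ε) : ∃ r ∈ Ioc 0 ε, μ (ball x r) / 2 ≤ μ (E ∩ ball x r) := by
  have hgt : ∀ᶠ ρ in 𝓝[>] (0 : ℝ), 2⁻¹ < μ (E ∩ closedBall x ρ) / μ (closedBall x ρ) :=
    hdens.eventually (eventually_gt_nhds ENNReal.one_half_lt_one)
  obtain ⟨r, hlt, hr⟩ := (hgt.and (Ioc_mem_nhdsGT hε)).exists
  refine ⟨r, hr, ?_⟩
  rw [measure_inter_ball_eq_measure_inter_closedBall, ← Measure.addHaar_closedBall_eq_addHaar_ball,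
    ENNReal.div_eq_inv_mul]
  exact ((ENNReal.lt_div_iff_mul_lt (Or.inl (measure_closedBall_pos μ x hr.1).ne')
    (Or.inl measure_closedBall_lt_top.ne)).1 hlt).le

lemma exists_ball_measure_inter_eq_half {E : Set V} {x c : V} {r R : ℝ} (hr : 0 < r)
    (hrR : r + dist x c ≤ R) (hx : μ (ball x r) / 2 ≤ μ (E ∩ ball x r))
    (hc : μ (E ∩ ball c R) ≤ μ (ball c R) / 2) :
    ∃ y s, 0 < s ∧ x ∈ ball y s ∧ ball y s ⊆ ball c R ∧ μ (ball y s ∩ E) = μ (ball y s) / 2 := by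
  set y : ℝ → V := fun t => AffineMap.lineMap x c t
  set s : ℝ → ℝ := fun t => (1 - t) * r + t * R
  have hsub : ∀ t ∈ Icc (0 : ℝ) 1, ball (y t) (s t) ⊆ ball c R := fun t ht =>
    ball_lineMap_subset_ball ht hrR
  have hmem : ∀ t ∈ Icc (0 : ℝ) 1, x ∈ ball (y t) (s t) := fun t ht =>
    mem_ball_lineMap_left hr ht hrR
  -- intersecting with `K` makes the measures finite without changing them for `t ∈ [0, 1]`
  set K := closedBall c R
  have hK : ∀ t ∈ Icc (0 : ℝ) 1, K ∩ ball (y t) (s t) = ball (y t) (s t) := fun t ht =>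
    inter_eq_right.2 ((hsub t ht).trans ball_subset_closedBall)
  have hy : Continuous y := AffineMap.lineMap_continuous
  have hs : Continuous s := by fun_prop
  have hKfin : μ K ≠ ∞ := measure_closedBall_lt_top.ne
  have hf : Continuous fun t => μ (E ∩ K ∩ ball (y t) (s t)) :=
    continuous_measure_inter_ball μ (measure_ne_top_of_subset inter_subset_right hKfin) hy hs
  have hg : Continuous fun t => μ (K ∩ ball (y t) (s t)) / 2 :=
    (ENNReal.continuous_div_const 2 two_ne_zero).comp (continuous_measure_inter_ball μ hKfin hy hs)
  have hy₀ : y 0 = x := AffineMap.lineMap_apply_zero x c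
  have hy₁ : y 1 = c := AffineMap.lineMap_apply_one x c
  have hs₀ : s 0 = r := by simp [s]
  have hs₁ : s 1 = R := by simp [s]
  obtain ⟨t, ht, heq⟩ := isPreconnected_Icc.intermediate_value₂ (right_mem_Icc.2 zero_le_one)
    (left_mem_Icc.2 zero_le_one) hf.continuousOn hg.continuousOn
    (by rwa [inter_assoc, hK 1 (right_mem_Icc.2 zero_le_one), hy₁, hs₁])
    (by rwa [inter_assoc, hK 0 (left_mem_Icc.2 zero_le_one), hy₀, hs₀])
  refine ⟨y t, s t, pos_of_mem_ball (hmem t ht), hmem t ht, hsub t ht, ?_⟩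
  rwa [inter_assoc, hK t ht, inter_comm] at heq

lemma exists_mem_ball_measure_inter_eq_half {E : Set V} {x c : V} {R : ℝ}
    (hdens : Tendsto (fun ρ => μ (E ∩ closedBall x ρ) / μ (closedBall x ρ)) (𝓝[>] 0) (𝓝 1))
    (hx : x ∈ ball c R) (hc : μ (E ∩ ball c R) ≤ μ (ball c R) / 2) :
    ∃ y s, 0 < s ∧ x ∈ ball y s ∧ ball y s ⊆ ball c R ∧ μ (ball y s ∩ E) = μ (ball y s) / 2 := by
  obtain ⟨r, ⟨hr, hrR⟩, hhalf⟩ :=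
    exists_half_le_measure_inter_ball μ hdens (sub_pos.2 (mem_ball.1 hx))
  exact exists_ball_measure_inter_eq_half μ hr (le_sub_iff_add_le.1 hrR) hhalf hc

theorem measure_diff_biUnion_halfBalls_eq_zero {E : Set V} {ℬ : Set (V × ℝ)}
    (hcover : E ⊆ ⋃ p ∈ ℬ, ball p.1 p.2)
    (hhalf : ∀ p ∈ ℬ, μ (E ∩ ball p.1 p.2) ≤ μ (ball p.1 p.2) / 2) :
    μ (E \ ⋃ q ∈ halfBalls μ E ℬ, ball q.1 q.2) = 0 := by
  have hopen : IsOpen (⋃ q ∈ halfBalls μ E ℬ, ball q.1 q.2) :=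
    isOpen_biUnion fun _ _ => isOpen_ball
  have hcovered : ∀ᵐ x ∂μ.restrict E, x ∈ ⋃ p ∈ ℬ, ball p.1 p.2 :=
    (ae_restrict_iff (isOpen_biUnion fun _ _ => isOpen_ball).measurableSet).2 (ae_of_all _ hcover)
  have hae : ∀ᵐ x ∂μ.restrict E, x ∈ ⋃ q ∈ halfBalls μ E ℬ, ball q.1 q.2 := by
    filter_upwards [Besicovitch.ae_tendsto_measure_inter_div μ E, hcovered] with x hdens hxℬ
    obtain ⟨p, hp, hxp⟩ := mem_iUnion₂.1 hxℬ
    obtain ⟨y, s, hs, hxy, hsub, heq⟩ :=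
      exists_mem_ball_measure_inter_eq_half μ hdens hxp (hhalf p hp)
    exact mem_biUnion (show (y, s) ∈ halfBalls μ E ℬ from ⟨hs, heq, p, hp, hsub⟩) hxy
  rw [sdiff_eq, inter_comm, ← Measure.restrict_apply hopen.measurableSet.compl]
  exact ae_iff.1 hae

end AddHaar

theorem stmt3_general (d : ℕ) (hd : 1 ≤ d) (E : Set (EuclideanSpace ℝ (Fin d)))
    (ℬ : Set (EuclideanSpace ℝ (Fin d) × ℝ))
    (hcover : E ⊆ ⋃ p ∈ ℬ, Metric.ball p.1 p.2)
    (hhalf : ∀ p ∈ ℬ, volume (E ∩ Metric.ball p.1 p.2) ≤ volume (Metric.ball p.1 p.2) / 2) :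
    ∃ ℱ : Set (EuclideanSpace ℝ (Fin d) × ℝ),
      (∀ q ∈ ℱ, 0 < q.2 ∧
        volume (Metric.ball q.1 q.2 ∩ E) = volume (Metric.ball q.1 q.2) / 2 ∧
        ∃ p ∈ ℬ, Metric.ball q.1 q.2 ⊆ Metric.ball p.1 p.2) ∧
      volume (E \ ⋃ q ∈ ℱ, Metric.ball q.1 q.2) = 0 := by
  have : Nontrivial (EuclideanSpace ℝ (Fin d)) :=
    Module.nontrivial_of_finrank_pos (R := ℝ) (by rwa [finrank_euclideanSpace_fin])
  exact ⟨halfBalls volume E ℬ, fun q hq => hq,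
    measure_diff_biUnion_halfBalls_eq_zero volume hcover hhalf⟩

/-- Boxing lemma for characteristic functions. Balls are encoded as
(center, radius) pairs. -/
theorem stmt3 (d : ℕ) (hd : 1 ≤ d) (E : Set (EuclideanSpace ℝ (Fin d)))
    (hE : MeasurableSet E) (hEfin : volume E < ⊤)
    (ℬ : Set (EuclideanSpace ℝ (Fin d) × ℝ))
    (hpos : ∀ p ∈ ℬ, 0 < p.2)
    (hcover : E ⊆ ⋃ p ∈ ℬ, Metric.ball p.1 p.2)
    (hhalf : ∀ p ∈ ℬ, volume (E ∩ Metric.ball p.1 p.2) ≤ volume (Metric.ball p.1 p.2) / 2) :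
    ∃ ℱ : Set (EuclideanSpace ℝ (Fin d) × ℝ),
      (∀ q ∈ ℱ, 0 < q.2 ∧
        volume (Metric.ball q.1 q.2 ∩ E) = volume (Metric.ball q.1 q.2) / 2 ∧
        ∃ p ∈ ℬ, Metric.ball q.1 q.2 ⊆ Metric.ball p.1 p.2) ∧
      volume (E \ ⋃ q ∈ ℱ, Metric.ball q.1 q.2) = 0 :=
  stmt3_general d hd E ℬ hcover hhalf
end

section
/- Continuity argument for the boxing lemma: let B(x₀,r₀) ⊆ B(x₁,r₁) be balls in ℝ^d and E measurable with |E∩B(x₀,r₀)| ≥ |B(x₀,r₀)|/2 and |E∩B(x₁,r₁)| ≤ |B(x₁,r₁)|/2. Then there exists t ∈ [0,1] such that the ball B(x_t, r_t), with x_t = (1−t)x₀ + t x₁ and r_t = (1−t)r₀ + t r₁, satisfies |E ∩ B(x_t,r_t)| = |B(x_t,r_t)|/2. -/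
open MeasureTheory Metric Set Filter Topology
open scoped ENNReal

/-!
Off the limiting sphere, which is Haar-null for a nonzero radius, the indicators of the moving
balls converge pointwise, so by dominated convergence `t ↦ |E ∩ B(x_t, r_t)|` and
`t ↦ |B(x_t, r_t)|` are continuous on `[0, 1]`, where `r_t > 0`. The intermediate value theorem,
applied in `ℝ≥0∞` to these two functions, gives the required `t`.
-/

lemma eventually_mem_ball_iff_of_dist_ne {X ι : Type*} [PseudoMetricSpace X] {l : Filter ι}
    {c : ι → X} {ρ : ι → ℝ} {x y : X} {r : ℝ} (hc : Tendsto c l (𝓝 x)) (hρ : Tendsto ρ l (𝓝 r))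
    (hy : dist y x ≠ r) : ∀ᶠ i in l, y ∈ ball (c i) (ρ i) ↔ y ∈ ball x r := by
  have hgap : Tendsto (fun i => dist y (c i) - ρ i) l (𝓝 (dist y x - r)) :=
    (tendsto_const_nhds.dist hc).sub hρ
  simp only [mem_ball]
  rcases hy.lt_or_gt with hin | hout
  · filter_upwards [hgap.eventually (gt_mem_nhds (sub_neg.2 hin))] with i hi
    exact iff_of_true (sub_neg.1 hi) hin
  · filter_upwards [hgap.eventually (lt_mem_nhds (sub_pos.2 hout))] with i hi
    exact iff_of_false (sub_pos.1 hi).not_gt hout.not_gt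

lemma tendsto_measure_ball {X ι : Type*} [PseudoMetricSpace X] [ProperSpace X]
    [MeasurableSpace X] [OpensMeasurableSpace X] {ν : Measure X} [IsFiniteMeasureOnCompacts ν]
    {l : Filter ι} [l.IsCountablyGenerated] {c : ι → X} {ρ : ι → ℝ} {x : X} {r : ℝ}
    (hc : Tendsto c l (𝓝 x)) (hρ : Tendsto ρ l (𝓝 r)) (hsphere : ν (sphere x r) = 0) :
    Tendsto (fun i => ν (ball (c i) (ρ i))) l (𝓝 (ν (ball x r))) := by
  have hsub : ∀ᶠ i in l, ball (c i) (ρ i) ⊆ ball x (r + 1) := by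
    filter_upwards [hc.eventually (ball_mem_nhds x one_half_pos),
      hρ.eventually (gt_mem_nhds (by linarith : r < r + 1 / 2))] with i hci hρi
    exact ball_subset_ball' (by linarith)
  refine tendsto_measure_of_ae_tendsto_indicator l measurableSet_ball
    (fun _ => measurableSet_ball) measurableSet_ball measure_ball_lt_top.ne hsub ?_
  filter_upwards [measure_eq_zero_iff_ae_notMem.1 hsphere] with y hy
  exact eventually_mem_ball_iff_of_dist_ne hc hρ hy

lemma continuousAt_addHaar_inter_ball {F T : Type*} [NormedAddCommGroup F] [NormedSpace ℝ F]
    [MeasurableSpace F] [BorelSpace F] [FiniteDimensional ℝ F] (μ : Measure F)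
    [μ.IsAddHaarMeasure] (E : Set F) [TopologicalSpace T] [FirstCountableTopology T]
    {c : T → F} {ρ : T → ℝ} {t : T} (hc : ContinuousAt c t) (hρ : ContinuousAt ρ t)
    (ht : ρ t ≠ 0) : ContinuousAt (fun s => μ (E ∩ ball (c s) (ρ s))) t := by
  simp only [inter_comm E, ← Measure.restrict_apply measurableSet_ball]
  exact tendsto_measure_ball hc hρ
    (nonpos_iff_eq_zero.1 <| (Measure.restrict_apply_le _ _).trans_eq <|
      Measure.addHaar_sphere_of_ne_zero μ _ ht)

theorem stmt4_general (d : ℕ) (E : Set (EuclideanSpace ℝ (Fin d)))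
    (x₀ x₁ : EuclideanSpace ℝ (Fin d)) (r₀ r₁ : ℝ) (hr₀ : 0 < r₀) (hr₁ : 0 < r₁)
    (h₀ : volume (Metric.ball x₀ r₀) / 2 ≤ volume (E ∩ Metric.ball x₀ r₀))
    (h₁ : volume (E ∩ Metric.ball x₁ r₁) ≤ volume (Metric.ball x₁ r₁) / 2) :
    ∃ t ∈ Set.Icc (0 : ℝ) 1,
      volume (E ∩ Metric.ball ((1 - t) • x₀ + t • x₁) ((1 - t) * r₀ + t * r₁))
        = volume (Metric.ball ((1 - t) • x₀ + t • x₁) ((1 - t) * r₀ + t * r₁)) / 2 := by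
  have hρ : ∀ t ∈ Icc (0 : ℝ) 1, (1 - t) * r₀ + t * r₁ ≠ 0 := fun t ht =>
    ((convex_Ioi 0) hr₀ hr₁ (sub_nonneg.2 ht.2) ht.1 (sub_add_cancel 1 t)).ne'
  have hcont : ∀ S : Set (EuclideanSpace ℝ (Fin d)), ContinuousOn
      (fun t : ℝ => volume (S ∩ ball ((1 - t) • x₀ + t • x₁) ((1 - t) * r₀ + t * r₁)))
      (Icc 0 1) := fun S t ht =>
    (continuousAt_addHaar_inter_ball volume S (c := fun t : ℝ => (1 - t) • x₀ + t • x₁)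
      (ρ := fun t : ℝ => (1 - t) * r₀ + t * r₁) (by fun_prop) (by fun_prop)
      (hρ t ht)).continuousWithinAt
  have hcont_half : ContinuousOn
      (fun t : ℝ => volume (ball ((1 - t) • x₀ + t • x₁) ((1 - t) * r₀ + t * r₁)) / 2)
      (Icc 0 1) :=
    (ENNReal.continuous_div_const 2 two_ne_zero).comp_continuousOn
      (by simpa only [univ_inter] using hcont univ)
  obtain ⟨t, ht, heq⟩ := isPreconnected_Icc.intermediate_value₂ (left_mem_Icc.2 zero_le_one)
    (right_mem_Icc.2 zero_le_one) hcont_half (hcont E)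
    (by simpa only [sub_zero, one_smul, zero_smul, add_zero, one_mul, zero_mul] using h₀)
    (by simpa only [sub_self, zero_smul, one_smul, zero_add, zero_mul, one_mul] using h₁)
  exact ⟨t, ht, heq.symm⟩

/-- continuity argument for the boxing lemma. -/
theorem stmt4 (d : ℕ) (hd : 1 ≤ d) (E : Set (EuclideanSpace ℝ (Fin d)))
    (hE : MeasurableSet E)
    (x₀ x₁ : EuclideanSpace ℝ (Fin d)) (r₀ r₁ : ℝ) (hr₀ : 0 < r₀) (hr₁ : 0 < r₁)
    (hsub : Metric.ball x₀ r₀ ⊆ Metric.ball x₁ r₁)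
    (h₀ : volume (Metric.ball x₀ r₀) / 2 ≤ volume (E ∩ Metric.ball x₀ r₀))
    (h₁ : volume (E ∩ Metric.ball x₁ r₁) ≤ volume (Metric.ball x₁ r₁) / 2) :
    ∃ t ∈ Set.Icc (0 : ℝ) 1,
      volume (E ∩ Metric.ball ((1 - t) • x₀ + t • x₁) ((1 - t) * r₀ + t * r₁))
        = volume (Metric.ball ((1 - t) • x₀ + t • x₁) ((1 - t) * r₀ + t * r₁)) / 2 :=
  stmt4_general d E x₀ x₁ r₀ r₁ hr₀ hr₁ h₀ h₁
end

section
/- Let λ ≤ 2^{-(d+1)/2} d^{-3/2} and let B, C be balls in ℝ^d with diam C ≥ diam B and |B ∩ C| ≤ λ|B|. Then the concentric rescaled ball (1 − 2 d^{3/(d+1)} λ^{2/(d+1)})·B is disjoint from C. -/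
/-!
Let `ε = 2 d^{3/(d+1)} λ^{2/(d+1)}`. If some `z` lies in both `B(x, (1 - ε) r)` and `C = B(y, s)`,
the overlap depth `δ = min (r + s - |x - y|, r)` of `B = B(x, r)` and `C` exceeds `ε r`. For
`d ≥ 2` the lens `B ∩ C` then contains the ellipsoid with semi-axis `δ / 5` along the line of
centres and `√(r δ / 2)` across it, whose volume `δ / 5 · (r δ / 2)^{(d-1)/2} |B(0,1)|` is the
determinant of the linear map producing it. As `ε^{d+1} = 2^{d+1} d³ λ²` and `4 d³ ≥ 25`, this
exceeds `λ r^d |B(0,1)| = λ |B|`, contradicting the hypothesis. For `d = 1` the lens contains a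
ball of radius `δ / 2 > λ r`.
-/

open MeasureTheory Metric Set Module
open scoped ENNReal

namespace Submodule

variable {E : Type*} [NormedAddCommGroup E] [InnerProductSpace ℝ E]
  (K : Submodule ℝ E) [K.HasOrthogonalProjection]

noncomputable def orthogonalScaling (α β : ℝ) : E →ₗ[ℝ] E :=
  (K.prodEquivOfIsCompl Kᗮ K.isCompl_orthogonal).conj
    ((α • LinearMap.id).prodMap (β • LinearMap.id))

theorem orthogonalScaling_add {p q : E} (hp : p ∈ K) (hq : q ∈ Kᗮ) (α β : ℝ) :
    K.orthogonalScaling α β (p + q) = α • p + β • q := by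
  have h : p + q = K.prodEquivOfIsCompl Kᗮ K.isCompl_orthogonal (⟨p, hp⟩, ⟨q, hq⟩) := rfl
  rw [orthogonalScaling, LinearEquiv.conj_apply_apply, h, LinearEquiv.symm_apply_apply]
  rfl

theorem det_orthogonalScaling [FiniteDimensional ℝ E] (α β : ℝ) :
    LinearMap.det (K.orthogonalScaling α β) = α ^ finrank ℝ K * β ^ finrank ℝ Kᗮ := by
  rw [orthogonalScaling, LinearEquiv.conj_apply, LinearMap.comp_assoc, LinearMap.det_conj,
    LinearMap.det_prodMap, LinearMap.det_smul, LinearMap.det_smul, LinearMap.det_id,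
    LinearMap.det_id, mul_one, mul_one]

theorem norm_add_orthogonalScaling_lt {w v : E} (hw : w ∈ K) {α β R : ℝ} (hα : 0 ≤ α)
    (hβ : 0 < β) (hR0 : 0 ≤ R) (hR : (‖w‖ + α) ^ 2 + β ^ 2 ≤ R ^ 2) (hv : ‖v‖ < 1) :
    ‖w + K.orthogonalScaling α β v‖ < R := by
  have pythagoras {a b : E} (ha : a ∈ K) (hb : b ∈ Kᗮ) : ‖a + b‖ ^ 2 = ‖a‖ ^ 2 + ‖b‖ ^ 2 := by
    rw [norm_add_sq_real, K.inner_right_of_mem_orthogonal ha hb, mul_zero, add_zero]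
  obtain ⟨p, hp, q, hq, rfl⟩ := K.exists_add_mem_mem_orthogonal v
  have hsplit : ‖w + K.orthogonalScaling α β (p + q)‖ ^ 2
      = ‖w + α • p‖ ^ 2 + β ^ 2 * ‖q‖ ^ 2 := by
    rw [K.orthogonalScaling_add hp hq, ← add_assoc,
      pythagoras (K.add_mem hw (K.smul_mem α hp)) (Kᗮ.smul_mem β hq), norm_smul, mul_pow,
      Real.norm_eq_abs, sq_abs]
  have hpq : ‖p‖ ^ 2 + ‖q‖ ^ 2 < 1 := by
    rw [← pythagoras hp hq]
    nlinarith [norm_nonneg (p + q)]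
  have hwp : ‖w + α • p‖ ≤ ‖w‖ + α :=
    calc ‖w + α • p‖ ≤ ‖w‖ + α * ‖p‖ := by
          simpa [norm_smul, abs_of_nonneg hα] using norm_add_le w (α • p)
      _ ≤ ‖w‖ + α := by nlinarith [norm_nonneg p]
  have hq : β ^ 2 * ‖q‖ ^ 2 < β ^ 2 :=
    mul_lt_of_lt_one_right (by positivity) (by nlinarith [sq_nonneg ‖p‖])
  refine lt_of_pow_lt_pow_left₀ 2 hR0 ?_
  rw [hsplit]
  linarith [pow_le_pow_left₀ (norm_nonneg _) hwp 2]

end Submodule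

theorem exists_norm_eq_one_eq_add_dist_smul {E : Type*} [NormedAddCommGroup E]
    [NormedSpace ℝ E] [Nontrivial E] (x y : E) :
    ∃ u : E, ‖u‖ = 1 ∧ y = x + dist x y • u := by
  rcases eq_or_ne x y with rfl | hxy
  · obtain ⟨u, hu⟩ := exists_norm_eq E zero_le_one
    exact ⟨u, hu, by simp⟩
  · have hyx : ‖y - x‖ ≠ 0 := norm_ne_zero_iff.2 (sub_ne_zero.2 hxy.symm)
    refine ⟨‖y - x‖⁻¹ • (y - x), ?_, ?_⟩
    · rw [norm_smul, norm_inv, norm_norm, inv_mul_cancel₀ hyx]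
    · rw [dist_comm, dist_eq_norm, smul_smul, mul_inv_cancel₀ hyx, one_smul, add_sub_cancel]

theorem le_of_ofReal_mul_addHaar_ball_le {E : Type*} [NormedAddCommGroup E] [NormedSpace ℝ E]
    [FiniteDimensional ℝ E] [MeasurableSpace E] (μ : Measure E) [μ.IsAddHaarMeasure] {a b : ℝ}
    (hb : 0 ≤ b) (h : ENNReal.ofReal a * μ (ball 0 1) ≤ ENNReal.ofReal b * μ (ball 0 1)) :
    a ≤ b :=
  (ENNReal.ofReal_le_ofReal_iff hb).1 <|
    (ENNReal.mul_le_mul_iff_left (measure_ball_pos μ _ one_pos).ne' measure_ball_lt_top.ne).1 h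

section LensVolume

variable {E : Type*} [NormedAddCommGroup E] [InnerProductSpace ℝ E] [FiniteDimensional ℝ E]
  [MeasurableSpace E] [BorelSpace E] (μ : Measure E) [μ.IsAddHaarMeasure] [Nontrivial E]

theorem ofReal_pow_mul_le_addHaar_ball_inter_ball {x y : E} {r s ρ : ℝ} (hρ : 0 ≤ ρ)
    (hρr : ρ ≤ r) (hρs : ρ ≤ s) (h : dist x y + 2 * ρ ≤ r + s) :
    ENNReal.ofReal (ρ ^ finrank ℝ E) * μ (ball 0 1) ≤ μ (ball x r ∩ ball y s) := by
  obtain ⟨p, hxp, hpy⟩ :=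
    exists_dist_le_le (sub_nonneg.2 hρr) (sub_nonneg.2 hρs) (by linarith : dist x y ≤ _)
  rw [← Measure.addHaar_ball μ p hρ]
  refine measure_mono (subset_inter (ball_subset_ball' ?_) (ball_subset_ball' ?_))
  · rw [dist_comm]; linarith
  · linarith

theorem ofReal_lens_mul_le_addHaar_ball_inter_ball {x y : E} {r s δ : ℝ} (hδ : 0 < δ)
    (hδr : δ ≤ r) (hrs : r ≤ s) (h : dist x y + δ ≤ r + s) :
    ENNReal.ofReal (δ / 5 * √(r * δ / 2) ^ (finrank ℝ E - 1)) * μ (ball 0 1)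
      ≤ μ (ball x r ∩ ball y s) := by
  have hr : 0 < r := hδ.trans_le hδr
  obtain ⟨u, hu, hy⟩ := exists_norm_eq_one_eq_add_dist_smul x y
  set t := dist x y
  set β := √(r * δ / 2)
  have hβ : 0 < β := Real.sqrt_pos.2 (by positivity)
  have hβsq : β ^ 2 = r * δ / 2 := Real.sq_sqrt (by positivity)
  set K := ℝ ∙ u
  set L := K.orthogonalScaling (δ / 5) β
  -- centred at depth `δ / 2` in both balls; the semi-axes fit because
  -- `(R - 3 δ / 10) ^ 2 + r δ / 2 ≤ R ^ 2` whenever `δ ≤ r ≤ R`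
  set p := x + (r - δ / 2) • u
  have hmem {c : E} {a R : ℝ} (hpc : p = c + a • u) (hR : 0 ≤ R)
      (haR : (|a| + δ / 5) ^ 2 + r * δ / 2 ≤ R ^ 2) {v : E} (hv : ‖v‖ < 1) :
      p + L v ∈ ball c R := by
    rw [mem_ball, dist_eq_norm, hpc, add_assoc, add_sub_cancel_left]
    refine K.norm_add_orthogonalScaling_lt (K.smul_mem a (Submodule.mem_span_singleton_self u))
      (by positivity) hβ hR ?_ hv
    rwa [norm_smul, hu, mul_one, Real.norm_eq_abs, hβsq]
  have hsub : (p + ·) '' (L '' ball 0 1) ⊆ ball x r ∩ ball y s := by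
    rintro _ ⟨_, ⟨v, hv, rfl⟩, rfl⟩
    rw [mem_ball_zero_iff] at hv
    refine ⟨hmem rfl hr.le ?_ hv,
      hmem (a := r - δ / 2 - t) (by rw [hy]; module) (by linarith) ?_ hv⟩
    · rw [abs_of_nonneg (by linarith)]
      nlinarith
    · have : |r - δ / 2 - t| ≤ s - δ / 2 :=
        abs_le.2 ⟨by linarith, by linarith [dist_nonneg (x := x) (y := y)]⟩
      nlinarith [abs_nonneg (r - δ / 2 - t)]
  have hK : finrank ℝ K = 1 := finrank_span_singleton (norm_ne_zero_iff.1 (by simp [hu]))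
  have hKperp : finrank ℝ Kᗮ = finrank ℝ E - 1 := by
    have := K.finrank_add_finrank_orthogonal
    omega
  calc ENNReal.ofReal (δ / 5 * β ^ (finrank ℝ E - 1)) * μ (ball 0 1)
      = μ ((p + ·) '' (L '' ball 0 1)) := by
        rw [image_add_left, measure_preimage_add, Measure.addHaar_image_linearMap,
          K.det_orthogonalScaling, hK, hKperp, pow_one, abs_of_nonneg (by positivity)]
    _ ≤ μ (ball x r ∩ ball y s) := measure_mono hsub

end LensVolume

noncomputable def ballShrinkRatio (n : ℕ) (lam : ℝ) : ℝ :=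
  2 * (n : ℝ) ^ ((3 : ℝ) / ((n : ℝ) + 1)) * lam ^ ((2 : ℝ) / ((n : ℝ) + 1))

theorem ballShrinkRatio_pos {n : ℕ} (hn : n ≠ 0) {lam : ℝ} (hlam : 0 < lam) :
    0 < ballShrinkRatio n lam := by
  have := Real.rpow_pos_of_pos (Nat.cast_pos.2 (Nat.pos_of_ne_zero hn)) ((3 : ℝ) / (n + 1))
  unfold ballShrinkRatio
  positivity

theorem ballShrinkRatio_one (lam : ℝ) : ballShrinkRatio 1 lam = 2 * lam := by
  norm_num [ballShrinkRatio]

theorem ballShrinkRatio_pow_succ (n : ℕ) {lam : ℝ} (hlam : 0 ≤ lam) :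
    ballShrinkRatio n lam ^ (n + 1) = 2 ^ (n + 1) * (n : ℝ) ^ 3 * lam ^ 2 := by
  have rpow_div_pow {b : ℝ} (hb : 0 ≤ b) (k : ℕ) :
      (b ^ ((k : ℝ) / ((n : ℝ) + 1))) ^ (n + 1) = b ^ k := by
    rw [← Real.rpow_natCast, ← Real.rpow_mul hb, Nat.cast_succ,
      div_mul_cancel₀ _ (by positivity), Real.rpow_natCast]
  rw [ballShrinkRatio, mul_pow, mul_pow, ← rpow_div_pow (Nat.cast_nonneg n) 3,
    ← rpow_div_pow hlam 2]
  norm_num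

theorem mul_pow_lt_lens {n : ℕ} (hn : 2 ≤ n) {lam r δ ε : ℝ} (hr : 0 < r) (hε : 0 < ε)
    (hεpow : ε ^ (n + 1) = 2 ^ (n + 1) * (n : ℝ) ^ 3 * lam ^ 2) (hδ : ε * r < δ) :
    lam * r ^ n < δ / 5 * √(r * δ / 2) ^ (n - 1) := by
  obtain ⟨m, rfl⟩ : ∃ m, n = m + 1 := ⟨n - 1, by omega⟩
  have hm : (1 : ℝ) ≤ m := by exact_mod_cast (by omega : 1 ≤ m)
  rw [Nat.add_sub_cancel]
  have hδ0 : 0 < δ := (mul_pos hε hr).trans hδ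
  have hβsq : √(r * δ / 2) ^ 2 = r * δ / 2 := Real.sq_sqrt (by positivity)
  refine lt_of_pow_lt_pow_left₀ 2 (by positivity)
    (lt_of_mul_lt_mul_left ?_ (by norm_num : (0 : ℝ) ≤ 25))
  have h25 : (25 : ℝ) ≤ 4 * ((m : ℝ) + 1) ^ 3 := by
    nlinarith [pow_le_pow_left₀ (by norm_num) (by linarith : (2 : ℝ) ≤ m + 1) 3]
  calc 25 * (lam * r ^ (m + 1)) ^ 2 ≤ 4 * ((m : ℝ) + 1) ^ 3 * lam ^ 2 * r ^ (2 * m + 2) := by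
        rw [show (lam * r ^ (m + 1)) ^ 2 = lam ^ 2 * r ^ (2 * m + 2) by ring, ← mul_assoc]
        gcongr
    _ = ε ^ (m + 1 + 1) * r ^ (2 * m + 2) / 2 ^ m := by
        rw [hεpow]; push_cast; field_simp; ring
    _ = (ε * r) ^ 2 * (ε * r ^ 2 / 2) ^ m := by rw [div_pow]; ring
    _ < δ ^ 2 * (r * δ / 2) ^ m := by
        have h1 : (ε * r) ^ 2 < δ ^ 2 := by gcongr
        have h2 : (ε * r ^ 2 / 2) ^ m ≤ (r * δ / 2) ^ m :=
          pow_le_pow_left₀ (by positivity) (by nlinarith) m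
        exact mul_lt_mul h1 h2 (by positivity) (by positivity)
    _ = 25 * (δ / 5 * √(r * δ / 2) ^ m) ^ 2 := by
        rw [mul_pow, ← pow_mul, mul_comm m 2, pow_mul, hβsq]; ring

section Disjointness

variable {E : Type*} [NormedAddCommGroup E] [InnerProductSpace ℝ E] [FiniteDimensional ℝ E]
  [MeasurableSpace E] [BorelSpace E] (μ : Measure E) [μ.IsAddHaarMeasure] [Nontrivial E]

theorem ofReal_mul_pow_mul_lt_addHaar_ball_inter_ball {lam r s : ℝ} {x y : E} (hlam : 0 < lam)
    (hr : 0 < r) (hrs : r ≤ s)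
    (hεr : ballShrinkRatio (finrank ℝ E) lam * r < min (r + s - dist x y) r) :
    ENNReal.ofReal (lam * r ^ finrank ℝ E) * μ (ball 0 1) < μ (ball x r ∩ ball y s) := by
  set δ := min (r + s - dist x y) r
  have hε0 := ballShrinkRatio_pos (finrank_pos (R := ℝ) (M := E)).ne' hlam
  have hδ0 : 0 < δ := (mul_pos hε0 hr).trans hεr
  have hδr : δ ≤ r := min_le_right _ _
  have hδ : dist x y + δ ≤ r + s := by linarith [min_le_left (r + s - dist x y) r]
  rw [← not_le]
  intro hle
  obtain hn | hn : finrank ℝ E = 1 ∨ 2 ≤ finrank ℝ E := by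
    have : 0 < finrank ℝ E := finrank_pos
    omega
  · have := le_of_ofReal_mul_addHaar_ball_le μ (by positivity) <|
      (ofReal_pow_mul_le_addHaar_ball_inter_ball μ (ρ := δ / 2) (by positivity)
        (by linarith) (by linarith) (by linarith)).trans hle
    rw [hn, pow_one, pow_one] at this
    rw [hn, ballShrinkRatio_one] at hεr
    linarith
  · have := le_of_ofReal_mul_addHaar_ball_le μ (by positivity) <|
      (ofReal_lens_mul_le_addHaar_ball_inter_ball μ hδ0 hδr hrs hδ).trans hle
    linarith [mul_pow_lt_lens hn hr hε0 (ballShrinkRatio_pow_succ _ hlam.le) hεr]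

theorem disjoint_ball_of_addHaar_ball_inter_ball_le {lam r s : ℝ} {x y : E} (hlam : 0 < lam)
    (hr : 0 < r) (hrs : r ≤ s)
    (hvol : μ (ball x r ∩ ball y s) ≤ ENNReal.ofReal lam * μ (ball x r)) :
    Disjoint (ball x ((1 - ballShrinkRatio (finrank ℝ E) lam) * r)) (ball y s) := by
  refine Set.disjoint_left.2 fun z hzx hzy ↦ ?_
  rw [mem_ball] at hzx hzy
  rw [Measure.addHaar_ball μ x hr.le, ← mul_assoc, ← ENNReal.ofReal_mul hlam.le] at hvol
  refine (hvol.trans_lt (ofReal_mul_pow_mul_lt_addHaar_ball_inter_ball μ hlam hr hrs ?_)).false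
  refine lt_min ?_ ?_
  · linarith [dist_triangle_left x y z]
  · linarith [dist_nonneg (x := z) (y := x)]

end Disjointness

theorem stmt16_general (d : ℕ) (hd : 1 ≤ d) (lam : ℝ) (hlam0 : 0 < lam)
    (x y : EuclideanSpace ℝ (Fin d)) (r s : ℝ) (hr : 0 < r)
    (hdiam : r ≤ s)
    (hvol : volume (Metric.ball x r ∩ Metric.ball y s)
      ≤ ENNReal.ofReal lam * volume (Metric.ball x r)) :
    Disjoint
      (Metric.ball x ((1 - 2 * (d : ℝ) ^ ((3 : ℝ) / ((d : ℝ) + 1)) *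
        lam ^ ((2 : ℝ) / ((d : ℝ) + 1))) * r))
      (Metric.ball y s) := by
  have : Nontrivial (EuclideanSpace ℝ (Fin d)) :=
    Module.nontrivial_of_finrank_pos (by rw [finrank_euclideanSpace_fin]; omega)
  have h := disjoint_ball_of_addHaar_ball_inter_ball_le volume hlam0 hr hdiam hvol
  rwa [finrank_euclideanSpace_fin] at h

/-- if two balls overlap in small volume, slightly shrinking the smaller
one (concentrically) makes them disjoint. -/
theorem stmt16 (d : ℕ) (hd : 1 ≤ d) (lam : ℝ) (hlam0 : 0 < lam)
    (hlam : lam ≤ 2 ^ (-((d : ℝ) + 1) / 2) * (d : ℝ) ^ (-(3 : ℝ) / 2))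
    (x y : EuclideanSpace ℝ (Fin d)) (r s : ℝ) (hr : 0 < r) (hs : 0 < s)
    (hdiam : r ≤ s)
    (hvol : volume (Metric.ball x r ∩ Metric.ball y s)
      ≤ ENNReal.ofReal lam * volume (Metric.ball x r)) :
    Disjoint
      (Metric.ball x ((1 - 2 * (d : ℝ) ^ ((3 : ℝ) / ((d : ℝ) + 1)) *
        lam ^ ((2 : ℝ) / ((d : ℝ) + 1))) * r))
      (Metric.ball y s) :=
  stmt16_general d hd lam hlam0 x y r s hr hdiam hvol
end

section
/- Let B ⊂ ℝ^d be a ball of radius r ≤ 1/2 centered at x_B with |x_B| ≤ 1 − r/2, and let y ∈ ∂B with |y| ≥ 1. Then the angle between y and y − x_B is at most π/3. -/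
open scoped RealInnerProductSpace

namespace InnerProductGeometry

variable {V : Type*} [NormedAddCommGroup V] [InnerProductSpace ℝ V]

theorem angle_le_pi_div_three_of_norm_mul_norm_le_two_inner {x y : V} (hx : x ≠ 0) (hy : y ≠ 0)
    (h : ‖x‖ * ‖y‖ ≤ 2 * ⟪x, y⟫) : angle x y ≤ Real.pi / 3 := by
  by_contra! hlt
  have hcos : Real.cos (angle x y) < 1 / 2 := by
    rw [← Real.cos_pi_div_three]
    exact Real.cos_lt_cos_of_nonneg_of_le_pi (by positivity) (angle_le_pi x y) hlt
  have hnorm : 0 < ‖x‖ * ‖y‖ := by positivity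
  have := cos_angle_mul_norm_mul_norm x y
  nlinarith

theorem two_mul_inner_sub_eq (x y : V) : 2 * ⟪y, y - x⟫ = ‖y‖ ^ 2 + ‖y - x‖ ^ 2 - ‖x‖ ^ 2 := by
  have := norm_sub_sq_real y (y - x)
  rw [sub_sub_cancel] at this
  linarith

theorem norm_mul_norm_sub_le_two_inner_sub {x y : V} (hx : ‖x‖ ≤ 1 - ‖y - x‖ / 2) (hy : 1 ≤ ‖y‖) :
    ‖y‖ * ‖y - x‖ ≤ 2 * ⟪y, y - x⟫ := by
  -- With `t = ‖y‖`, `s = ‖y - x‖` this reduces to `t² - t s + 3 s² / 4 + s - 1 ≥ 0`,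
  -- which holds at `t = 1` and increases for `t ≥ 1 ≥ s / 2`.
  rw [two_mul_inner_sub_eq]
  have hx_sq : ‖x‖ ^ 2 ≤ (1 - ‖y - x‖ / 2) ^ 2 := pow_le_pow_left₀ (norm_nonneg x) hx 2
  nlinarith [sq_nonneg ‖y - x‖, mul_nonneg (sub_nonneg.2 hy) (norm_nonneg x)]

end InnerProductGeometry

theorem stmt19_general (d : ℕ) (xB y : EuclideanSpace ℝ (Fin d)) (r : ℝ)
    (hr0 : 0 < r) (hxB : ‖xB‖ ≤ 1 - r / 2)
    (hy : y ∈ Metric.sphere xB r) (hy1 : 1 ≤ ‖y‖) :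
    InnerProductGeometry.angle y (y - xB) ≤ Real.pi / 3 := by
  rw [mem_sphere_iff_norm] at hy
  apply InnerProductGeometry.angle_le_pi_div_three_of_norm_mul_norm_le_two_inner
  · exact norm_pos_iff.1 (by linarith)
  · exact norm_pos_iff.1 (by rwa [hy])
  · exact InnerProductGeometry.norm_mul_norm_sub_le_two_inner_sub (by rwa [hy]) hy1

/-- for a ball `B(x_B, r)` with `r ≤ 1/2`, `|x_B| ≤ 1 - r/2`, and a point
`y ∈ ∂B` with `|y| ≥ 1`, the angle between `y` and `y - x_B` is at most `π/3`. -/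
theorem stmt19 (d : ℕ) (hd : 1 ≤ d) (xB y : EuclideanSpace ℝ (Fin d)) (r : ℝ)
    (hr0 : 0 < r) (hr : r ≤ 1 / 2) (hxB : ‖xB‖ ≤ 1 - r / 2)
    (hy : y ∈ Metric.sphere xB r) (hy1 : 1 ≤ ‖y‖) :
    InnerProductGeometry.angle y (y - xB) ≤ Real.pi / 3 :=
  stmt19_general d xB y r hr0 hxB hy hy1
end
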